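/- Let α, β, γ, δ be real numbers, ε > 0, and let r₀ ≠ 0, r₁, ω be real numbers. Set P₀ = α + β r₀² + ε γ r₀ r₁ and Q₀ = −1 + r₀² + ε δ r₀ r₁. If ω − 1/(2ε) − ε³ P₀ = r₁/r₀ and (r₁/r₀)² = −ε² Q₀, then the functions B₀(x) = r₀ e^{iωx} and B₁(x) = i r₁ e^{iωx} solve the truncated 1:1 resonance system: B₀'(x) = (i/(2ε))B₀(x) + B₁(x) + i ε³ B₀(x) P(x) and B₁'(x) = (i/(2ε))B₁(x) + ε² B₀(x) Q(x) + i ε³ B₁(x) P(x) for all x ∈ ℝ, where K(x) = (i/2)(B₀(x) conj(B₁(x)) − conj(B₀(x)) B₁(x)), P(x) = α + β|B₀(x)|² + ε γ K(x), Q(x) = −1 + |B₀(x)|² + ε δ K(x). -/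

import Mathlib

/-- The quantity `K(B₀,B₁)` of the 1:1 resonance system. -/
noncomputable def Kfun (B₀ B₁ : ℝ → ℂ) (x : ℝ) : ℂ :=
  (Complex.I / 2) * (B₀ x * (starRingEnd ℂ) (B₁ x) - (starRingEnd ℂ) (B₀ x) * B₁ x)

/-- The quantity `P = α + β|B₀|² + εγK`. -/
noncomputable def Pfun (α β γ ε : ℝ) (B₀ B₁ : ℝ → ℂ) (x : ℝ) : ℂ :=
  (α : ℂ) + (β : ℂ) * (‖B₀ x‖ : ℂ) ^ 2 + (ε : ℂ) * (γ : ℂ) * Kfun B₀ B₁ x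

/-- The quantity `Q = −1 + |B₀|² + εδK`. -/
noncomputable def Qfun (δ ε : ℝ) (B₀ B₁ : ℝ → ℂ) (x : ℝ) : ℂ :=
  -1 + (‖B₀ x‖ : ℂ) ^ 2 + (ε : ℂ) * (δ : ℂ) * Kfun B₀ B₁ x


/-!
Along the wave, `|B₀|² = r₀²` and `K = r₀ r₁` are constant, so `P` and `Q` are the constants `P₀`, `Q₀`.
Since `B₀` and `B₁` are multiples of `e^{iωx}`, both equations reduce, after cancelling `e^{iωx}`, to
`ω r₀ = r₀/(2ε) + r₁ + ε³ P₀ r₀` and `ω r₁ = r₁/(2ε) − ε² Q₀ r₀ + ε³ P₀ r₁`. These follow from the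
hypotheses on multiplying the first by `r₀`, resp. `r₁`, and the second by `r₀`, using `r₁ = r₀ · (r₁/r₀)`.
-/

open Complex

theorem hasDerivAt_const_mul_cexp_mul_ofReal (c k : ℂ) (x : ℝ) :
    HasDerivAt (fun y : ℝ => c * exp (k * y)) (k * (c * exp (k * x))) x := by
  have hlin : HasDerivAt (fun y : ℝ => k * y) k x := by
    simpa using (ofRealCLM.hasDerivAt (x := x)).const_mul k
  rw [mul_left_comm, mul_comm k]
  exact hlin.cexp.const_mul c

theorem norm_cexp_I_mul_ofReal_mul_ofReal (ω y : ℝ) : ‖exp (I * ω * y)‖ = 1 := by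
  rw [show I * ω * y = ((ω * y : ℝ) : ℂ) * I by push_cast; ring]
  exact norm_exp_ofReal_mul_I _

theorem Kfun_ofReal_mul_I_mul (a b : ℝ) (u : ℝ → ℂ) (x : ℝ) :
    Kfun (fun y => a * u y) (fun y => I * b * u y) x = a * b * ‖u x‖ ^ 2 := by
  simp only [Kfun, map_mul, conj_I, conj_ofReal]
  linear_combination -(a * b * ‖u x‖ ^ 2 : ℂ) * I_sq - I ^ 2 * a * b * mul_conj' (u x)

theorem ofReal_norm_ofReal_mul_sq_of_norm_eq_one (a : ℝ) (z : ℂ) (hz : ‖z‖ = 1) :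
    ((‖(a : ℂ) * z‖ : ℝ) : ℂ) ^ 2 = (a : ℂ) ^ 2 := by
  rw [norm_mul, hz, mul_one, norm_real, Real.norm_eq_abs, ← ofReal_pow, sq_abs, ofReal_pow]

theorem rotatingWave_amplitude_relations {ε r₀ r₁ ω p q : ℝ} (hr₀ : r₀ ≠ 0)
    (h1 : ω - 1 / (2 * ε) - ε ^ 3 * p = r₁ / r₀) (h2 : (r₁ / r₀) ^ 2 = -ε ^ 2 * q) :
    ω * r₀ = r₀ / (2 * ε) + r₁ + ε ^ 3 * p * r₀ ∧
      ω * r₁ = r₁ / (2 * ε) - ε ^ 2 * q * r₀ + ε ^ 3 * p * r₁ := by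
  have hr : r₀ * (r₁ / r₀) = r₁ := mul_div_cancel₀ r₁ hr₀
  constructor
  · linear_combination r₀ * h1 + hr
  · linear_combination r₁ * h1 + r₀ * h2 - r₁ / r₀ * hr

theorem Pfun_ofReal_mul_I_mul {u : ℝ → ℂ} {x : ℝ} (hu : ‖u x‖ = 1) (a b α β γ ε : ℝ) :
    Pfun α β γ ε (fun y => a * u y) (fun y => I * b * u y) x = α + β * a ^ 2 + ε * γ * (a * b) := by
  simp only [Pfun, Kfun_ofReal_mul_I_mul, ofReal_norm_ofReal_mul_sq_of_norm_eq_one a (u x) hu,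
    hu, ofReal_one]
  ring

theorem Qfun_ofReal_mul_I_mul {u : ℝ → ℂ} {x : ℝ} (hu : ‖u x‖ = 1) (a b δ ε : ℝ) :
    Qfun δ ε (fun y => a * u y) (fun y => I * b * u y) x = -1 + a ^ 2 + ε * δ * (a * b) := by
  simp only [Qfun, Kfun_ofReal_mul_I_mul, ofReal_norm_ofReal_mul_sq_of_norm_eq_one a (u x) hu,
    hu, ofReal_one]
  ring

theorem rotating_wave_solves_truncated_system_general (α β γ δ ε r₀ r₁ ω : ℝ)
    (hr₀ : r₀ ≠ 0)
    (h1 : ω - 1 / (2 * ε) - ε ^ 3 * (α + β * r₀ ^ 2 + ε * γ * r₀ * r₁) = r₁ / r₀)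
    (h2 : (r₁ / r₀) ^ 2 = -ε ^ 2 * (-1 + r₀ ^ 2 + ε * δ * r₀ * r₁)) :
    ∀ x : ℝ,
      (deriv (fun y : ℝ => (r₀ : ℂ) * Complex.exp (Complex.I * ω * y)) x
        = (Complex.I / (2 * ε)) * ((r₀ : ℂ) * Complex.exp (Complex.I * ω * x))
          + Complex.I * (r₁ : ℂ) * Complex.exp (Complex.I * ω * x)
          + Complex.I * (ε : ℂ) ^ 3 * ((r₀ : ℂ) * Complex.exp (Complex.I * ω * x))
            * Pfun α β γ ε (fun y : ℝ => (r₀ : ℂ) * Complex.exp (Complex.I * ω * y))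
                (fun y : ℝ => Complex.I * (r₁ : ℂ) * Complex.exp (Complex.I * ω * y)) x)
      ∧ (deriv (fun y : ℝ => Complex.I * (r₁ : ℂ) * Complex.exp (Complex.I * ω * y)) x
        = (Complex.I / (2 * ε)) * (Complex.I * (r₁ : ℂ) * Complex.exp (Complex.I * ω * x))
          + (ε : ℂ) ^ 2 * ((r₀ : ℂ) * Complex.exp (Complex.I * ω * x))
            * Qfun δ ε (fun y : ℝ => (r₀ : ℂ) * Complex.exp (Complex.I * ω * y))
                (fun y : ℝ => Complex.I * (r₁ : ℂ) * Complex.exp (Complex.I * ω * y)) x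
          + Complex.I * (ε : ℂ) ^ 3
            * (Complex.I * (r₁ : ℂ) * Complex.exp (Complex.I * ω * x))
            * Pfun α β γ ε (fun y : ℝ => (r₀ : ℂ) * Complex.exp (Complex.I * ω * y))
                (fun y : ℝ => Complex.I * (r₁ : ℂ) * Complex.exp (Complex.I * ω * y)) x) := by
  intro x
  obtain ⟨hB₀, hB₁⟩ := rotatingWave_amplitude_relations hr₀ h1 h2
  replace hB₀ := congrArg ofReal hB₀
  replace hB₁ := congrArg ofReal hB₁
  push_cast at hB₀ hB₁
  have hu := norm_cexp_I_mul_ofReal_mul_ofReal ω x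
  rw [(hasDerivAt_const_mul_cexp_mul_ofReal _ _ x).deriv,
    (hasDerivAt_const_mul_cexp_mul_ofReal _ _ x).deriv,
    Pfun_ofReal_mul_I_mul (u := fun y => exp (I * ω * y)) hu,
    Qfun_ofReal_mul_I_mul (u := fun y => exp (I * ω * y)) hu]
  set e := exp (I * ω * x)
  constructor
  · linear_combination I * e * hB₀
  · linear_combination (norm := ring_nf) -e * hB₁
    simp only [I_sq]
    ring

/-- If `(r₀, r₁, ω)` satisfy the two algebraic relations, then the rotating wave
`B₀(x) = r₀ e^{iωx}`, `B₁(x) = i r₁ e^{iωx}` solves the truncated 1:1 resonance system. -/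
theorem rotating_wave_solves_truncated_system (α β γ δ ε r₀ r₁ ω : ℝ)
    (hε : 0 < ε) (hr₀ : r₀ ≠ 0)
    (h1 : ω - 1 / (2 * ε) - ε ^ 3 * (α + β * r₀ ^ 2 + ε * γ * r₀ * r₁) = r₁ / r₀)
    (h2 : (r₁ / r₀) ^ 2 = -ε ^ 2 * (-1 + r₀ ^ 2 + ε * δ * r₀ * r₁)) :
    ∀ x : ℝ,
      (deriv (fun y : ℝ => (r₀ : ℂ) * Complex.exp (Complex.I * ω * y)) x
        = (Complex.I / (2 * ε)) * ((r₀ : ℂ) * Complex.exp (Complex.I * ω * x))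
          + Complex.I * (r₁ : ℂ) * Complex.exp (Complex.I * ω * x)
          + Complex.I * (ε : ℂ) ^ 3 * ((r₀ : ℂ) * Complex.exp (Complex.I * ω * x))
            * Pfun α β γ ε (fun y : ℝ => (r₀ : ℂ) * Complex.exp (Complex.I * ω * y))
                (fun y : ℝ => Complex.I * (r₁ : ℂ) * Complex.exp (Complex.I * ω * y)) x)
      ∧ (deriv (fun y : ℝ => Complex.I * (r₁ : ℂ) * Complex.exp (Complex.I * ω * y)) x
        = (Complex.I / (2 * ε)) * (Complex.I * (r₁ : ℂ) * Complex.exp (Complex.I * ω * x))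
          + (ε : ℂ) ^ 2 * ((r₀ : ℂ) * Complex.exp (Complex.I * ω * x))
            * Qfun δ ε (fun y : ℝ => (r₀ : ℂ) * Complex.exp (Complex.I * ω * y))
                (fun y : ℝ => Complex.I * (r₁ : ℂ) * Complex.exp (Complex.I * ω * y)) x
          + Complex.I * (ε : ℂ) ^ 3
            * (Complex.I * (r₁ : ℂ) * Complex.exp (Complex.I * ω * x))
            * Pfun α β γ ε (fun y : ℝ => (r₀ : ℂ) * Complex.exp (Complex.I * ω * y))
                (fun y : ℝ => Complex.I * (r₁ : ℂ) * Complex.exp (Complex.I * ω * y)) x) :=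
  rotating_wave_solves_truncated_system_general α β γ δ ε r₀ r₁ ω hr₀ h1 h2
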